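/- arXiv:1004.4408 — 6 statements merged into one kernel-verified Lean document; each statement's English description precedes it below -/
import Mathlib

section
/- Let B = (b_{ij}) be a real symmetric n×n matrix with nonnegative diagonal entries, and let B̃ be the symmetric matrix with B̃_{ii} = b_{ii} and B̃_{ij} = -|b_{ij}| for i ≠ j. Then the minimal eigenvalue satisfies λ_min(B) ≥ λ_min(B̃). -/
open Finset

namespace Matrix

variable {ι : Type*} [DecidableEq ι]

/-- The matrix `B̃` of the statement. -/
def negAbsOffDiag (B : Matrix ι ι ℝ) : Matrix ι ι ℝ :=
  of fun i j => if i = j then B i i else -|B i j|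

theorem abs_mul_negAbsOffDiag_mul_abs_le (B : Matrix ι ι ℝ) (v : ι → ℝ) (i j : ι) :
    |v i| * B.negAbsOffDiag i j * |v j| ≤ v i * B i j * v j := by
  by_cases hij : i = j
  · subst hij
    simp only [negAbsOffDiag, of_apply, if_true]
    rw [mul_right_comm, abs_mul_abs_self, mul_right_comm]
  · have hmul : |v i| * -|B i j| * |v j| = -|v i * B i j * v j| := by
      rw [abs_mul, abs_mul]; ring
    simpa only [negAbsOffDiag, of_apply, hij, if_false, hmul] using neg_abs_le _

theorem sum_abs_mul_negAbsOffDiag_mul_abs_le [Fintype ι] (B : Matrix ι ι ℝ) (v : ι → ℝ) :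
    ∑ i, ∑ j, |v i| * B.negAbsOffDiag i j * |v j| ≤ ∑ i, ∑ j, v i * B i j * v j :=
  sum_le_sum fun i _ => sum_le_sum fun j _ => abs_mul_negAbsOffDiag_mul_abs_le B v i j

/-- Test the bound for `B̃` on `|v|`. -/
theorem rayleigh_lower_bound_of_negAbsOffDiag [Fintype ι] (B : Matrix ι ι ℝ) {c : ℝ}
    (hc : ∀ v : ι → ℝ, c * ∑ i, v i ^ 2 ≤ ∑ i, ∑ j, v i * B.negAbsOffDiag i j * v j)
    (v : ι → ℝ) : c * ∑ i, v i ^ 2 ≤ ∑ i, ∑ j, v i * B i j * v j :=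
  calc c * ∑ i, v i ^ 2 = c * ∑ i, |v i| ^ 2 := by simp only [sq_abs]
    _ ≤ ∑ i, ∑ j, |v i| * B.negAbsOffDiag i j * |v j| := hc fun i => |v i|
    _ ≤ ∑ i, ∑ j, v i * B i j * v j := sum_abs_mul_negAbsOffDiag_mul_abs_le B v

end Matrix

theorem lambdaMin_ge_lambdaMin_abs_offdiag_general
    (n : ℕ) (B : Matrix (Fin n) (Fin n) ℝ)
    (Bt : Matrix (Fin n) (Fin n) ℝ)
    (hBt : ∀ i j, Bt i j = if i = j then B i i else -|B i j|)
    (lB lBt : ℝ)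
    (hlB : IsGreatest {c : ℝ | ∀ v : Fin n → ℝ,
        c * ∑ i, v i ^ 2 ≤ ∑ i, ∑ j, v i * B i j * v j} lB)
    (hlBt : IsGreatest {c : ℝ | ∀ v : Fin n → ℝ,
        c * ∑ i, v i ^ 2 ≤ ∑ i, ∑ j, v i * Bt i j * v j} lBt) :
    lBt ≤ lB := by
  have hBt_eq : Bt = B.negAbsOffDiag := Matrix.ext hBt
  subst hBt_eq
  exact hlB.2 (B.rayleigh_lower_bound_of_negAbsOffDiag hlBt.1)

/-- For a real symmetric matrix `B` with nonnegative diagonal, and `B̃` obtained by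
keeping the diagonal and replacing off-diagonal entries `b_{ij}` by `-|b_{ij}|`,
the minimal eigenvalues (characterized as the best constants in the Rayleigh
quotient lower bound) satisfy `λ_min(B) ≥ λ_min(B̃)`. -/
theorem lambdaMin_ge_lambdaMin_abs_offdiag
    (n : ℕ) (B : Matrix (Fin n) (Fin n) ℝ)
    (hsymm : B.IsSymm)
    (hdiag : ∀ i, 0 ≤ B i i)
    (Bt : Matrix (Fin n) (Fin n) ℝ)
    (hBt : ∀ i j, Bt i j = if i = j then B i i else -|B i j|)
    (lB lBt : ℝ)
    (hlB : IsGreatest {c : ℝ | ∀ v : Fin n → ℝ,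
        c * ∑ i, v i ^ 2 ≤ ∑ i, ∑ j, v i * B i j * v j} lB)
    (hlBt : IsGreatest {c : ℝ | ∀ v : Fin n → ℝ,
        c * ∑ i, v i ^ 2 ≤ ∑ i, ∑ j, v i * Bt i j * v j} lBt) :
    lBt ≤ lB :=
  lambdaMin_ge_lambdaMin_abs_offdiag_general n B Bt hBt lB lBt hlB hlBt
end

section
/- For all x > 0 and all c ≥ 1, ∫₀^x e^{cy²} dy · ∫_x^∞ e^{-cz²} dz ≤ π^{5/2}/(16√c). -/
/-!
The substitution `u = √c y` scales both integrals by `1 / √c`, which reduces the bound to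
`c = 1`, where the product is at most `√π / 2`. For the tail, `z ≥ x ≥ 0` gives
`z² ≥ x² + (z - x)²`, so `∫ₓ^∞ e^{-z²} ≤ e^{-x²} ∫₀^∞ e^{-u²} = e^{-x²} √π / 2`. For the
front integral, `e^{y²} ≤ 2y e^{y²} + e^{-y}` on `y ≥ 0` (for `y ≤ 1` use `1 - 2y ≤ e^{-2y}`
and `y² ≤ y`), and the right side is the derivative of `e^{y²} - e^{-y}`, so
`∫₀^x e^{y²} ≤ e^{x²}`. Finally `√π / (2c) ≤ π^{5/2} / (16 √c)` because `π² ≥ 8` and `√c ≤ c`.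
-/

open Real MeasureTheory Set

lemma setIntegral_Ioi_comp_sub_right {E : Type*} [NormedAddCommGroup E] [NormedSpace ℝ E]
    (f : ℝ → E) (a : ℝ) : ∫ z in Ioi a, f (z - a) = ∫ u in Ioi 0, f u := by
  have h := (measurePreserving_add_right volume a).setIntegral_preimage_emb
    (MeasurableEquiv.addRight a).measurableEmbedding (fun z => f (z - a)) (Ioi a)
  have hpre : (· + a) ⁻¹' Ioi a = Ioi 0 := by ext; simp
  simpa [hpre] using h.symm

lemma exp_sq_le_two_mul_mul_exp_sq_add_exp_neg {y : ℝ} (hy : 0 ≤ y) :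
    exp (y ^ 2) ≤ 2 * y * exp (y ^ 2) + exp (-y) := by
  rcases le_total y 1 with hy1 | hy1
  · have : (1 - 2 * y) * exp (y ^ 2) ≤ exp (-y) :=
      calc (1 - 2 * y) * exp (y ^ 2) ≤ exp (-2 * y) * exp (y ^ 2) := by
            gcongr; linarith [add_one_le_exp (-2 * y)]
        _ = exp (y ^ 2 - 2 * y) := by rw [← exp_add]; congr 1; ring
        _ ≤ exp (-y) := exp_le_exp.2 (by nlinarith)
    linarith
  · nlinarith [exp_pos (y ^ 2), exp_pos (-y)]

lemma integral_exp_sq_le {x : ℝ} (hx : 0 ≤ x) : ∫ y in 0..x, exp (y ^ 2) ≤ exp (x ^ 2) := by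
  have hderiv (y : ℝ) : HasDerivAt (fun y => exp (y ^ 2) - exp (-y))
      (2 * y * exp (y ^ 2) + exp (-y)) y := by
    refine (((hasDerivAt_pow 2 y).exp).sub (hasDerivAt_neg y).exp).congr_deriv ?_
    push_cast; ring
  calc ∫ y in 0..x, exp (y ^ 2)
      ≤ ∫ y in 0..x, (2 * y * exp (y ^ 2) + exp (-y)) :=
        intervalIntegral.integral_mono_on hx
          ((by fun_prop : Continuous _).intervalIntegrable _ _)
          ((by fun_prop : Continuous _).intervalIntegrable _ _)
          fun y hy => exp_sq_le_two_mul_mul_exp_sq_add_exp_neg hy.1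
    _ = exp (x ^ 2) - exp (-x) := by
        rw [intervalIntegral.integral_eq_sub_of_hasDerivAt (fun y _ => hderiv y)
          ((by fun_prop : Continuous _).intervalIntegrable _ _)]
        simp
    _ ≤ exp (x ^ 2) := by linarith [exp_pos (-x)]

lemma integral_Ioi_exp_neg_sq_le {x : ℝ} (hx : 0 ≤ x) :
    ∫ z in Ioi x, exp (-z ^ 2) ≤ exp (-x ^ 2) * (√π / 2) := by
  have hint : Integrable fun z : ℝ => exp (-z ^ 2) := by
    simpa using integrable_exp_neg_mul_sq one_pos
  calc ∫ z in Ioi x, exp (-z ^ 2)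
      ≤ ∫ z in Ioi x, exp (-x ^ 2) * exp (-(z - x) ^ 2) := by
        refine setIntegral_mono_on hint.integrableOn
          ((hint.comp_sub_right x).const_mul _).integrableOn measurableSet_Ioi fun z hz => ?_
        rw [← exp_add]
        exact exp_le_exp.2 (by nlinarith [mem_Ioi.1 hz])
    _ = exp (-x ^ 2) * (√π / 2) := by
        rw [integral_const_mul, setIntegral_Ioi_comp_sub_right (fun u => exp (-u ^ 2))]
        simpa using integral_gaussian_Ioi 1

lemma integral_exp_sq_mul_integral_Ioi_exp_neg_sq_le {x : ℝ} (hx : 0 ≤ x) :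
    (∫ y in 0..x, exp (y ^ 2)) * ∫ z in Ioi x, exp (-z ^ 2) ≤ √π / 2 := by
  have htail_nonneg : 0 ≤ ∫ z in Ioi x, exp (-z ^ 2) :=
    setIntegral_nonneg measurableSet_Ioi fun z _ => (exp_pos _).le
  calc (∫ y in 0..x, exp (y ^ 2)) * ∫ z in Ioi x, exp (-z ^ 2)
      ≤ exp (x ^ 2) * (exp (-x ^ 2) * (√π / 2)) :=
        mul_le_mul (integral_exp_sq_le hx) (integral_Ioi_exp_neg_sq_le hx) htail_nonneg
          (exp_pos _).le
    _ = √π / 2 := by rw [← mul_assoc, ← exp_add]; simp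

lemma mul_sq_eq_sq_sqrt_mul {c : ℝ} (hc : 0 ≤ c) (y : ℝ) : c * y ^ 2 = (√c * y) ^ 2 := by
  rw [mul_pow, sq_sqrt hc]

lemma intervalIntegral_exp_mul_sq_eq {c : ℝ} (hc : 0 < c) (x : ℝ) :
    ∫ y in 0..x, exp (c * y ^ 2) = (√c)⁻¹ * ∫ u in 0..√c * x, exp (u ^ 2) := by
  simp_rw [mul_sq_eq_sq_sqrt_mul hc.le]
  simp [intervalIntegral.integral_comp_mul_left (fun u => exp (u ^ 2)) (sqrt_ne_zero'.2 hc)]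

lemma setIntegral_Ioi_exp_neg_mul_sq_eq {c : ℝ} (hc : 0 < c) (x : ℝ) :
    ∫ z in Ioi x, exp (-(c * z ^ 2)) = (√c)⁻¹ * ∫ u in Ioi (√c * x), exp (-u ^ 2) := by
  simp_rw [mul_sq_eq_sq_sqrt_mul hc.le]
  simp [integral_comp_mul_left_Ioi (fun u => exp (-u ^ 2)) x (sqrt_pos.2 hc)]

lemma inv_mul_sqrt_pi_div_two_le {c : ℝ} (hc : 1 ≤ c) :
    c⁻¹ * (√π / 2) ≤ π ^ ((5:ℝ) / 2) / (16 * √c) := by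
  have hpi : π ^ ((5:ℝ) / 2) = π ^ 2 * √π := by
    rw [show (5:ℝ) / 2 = (2:ℕ) + 1 / 2 by norm_num, rpow_add pi_pos, rpow_natCast, sqrt_eq_rpow]
  have hsqrt_le : √c ≤ c := sqrt_le_self_iff.2 (.inr hc)
  have hpi_sq : 8 ≤ π ^ 2 := by nlinarith [pi_gt_three]
  calc c⁻¹ * (√π / 2) = √π / (2 * c) := by ring
    _ ≤ √π / (2 * √c) := by gcongr
    _ = 8 * √π / (16 * √c) := by ring
    _ ≤ π ^ ((5:ℝ) / 2) / (16 * √c) := by rw [hpi]; gcongr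

/-- For all `x > 0` and `c ≥ 1`,
`∫₀ˣ e^{cy²} dy · ∫ₓ^∞ e^{-cz²} dz ≤ π^{5/2} / (16 √c)`. -/
theorem gaussian_double_integral_bound (x c : ℝ) (hx : 0 < x) (hc : 1 ≤ c) :
    (∫ y in (0:ℝ)..x, Real.exp (c * y ^ 2)) * (∫ z in Set.Ioi x, Real.exp (-(c * z ^ 2)))
      ≤ Real.pi ^ ((5:ℝ)/2) / (16 * Real.sqrt c) := by
  have hc0 : 0 < c := by linarith
  rw [intervalIntegral_exp_mul_sq_eq hc0, setIntegral_Ioi_exp_neg_mul_sq_eq hc0]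
  calc (√c)⁻¹ * (∫ u in 0..√c * x, exp (u ^ 2)) * ((√c)⁻¹ * ∫ u in Ioi (√c * x), exp (-u ^ 2))
      = (√c * √c)⁻¹ * ((∫ u in 0..√c * x, exp (u ^ 2)) * ∫ u in Ioi (√c * x), exp (-u ^ 2)) := by
        ring
    _ = c⁻¹ * ((∫ u in 0..√c * x, exp (u ^ 2)) * ∫ u in Ioi (√c * x), exp (-u ^ 2)) := by
        rw [mul_self_sqrt hc0.le]
    _ ≤ c⁻¹ * (√π / 2) := by
        gcongr
        exact integral_exp_sq_mul_integral_Ioi_exp_neg_sq_le (by positivity)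
    _ ≤ π ^ ((5:ℝ) / 2) / (16 * √c) := inv_mul_sqrt_pi_div_two_le hc
end

section
/- (Gautschi's inequality for p = 2) For all x ≥ 0, (1/2)(√(x²+2) - x) < e^{x²} ∫_x^∞ e^{-y²} dy ≤ (π/4)(√(x² + 4/π) - x). -/
/-!
Write `I(x) = ∫ₓ^∞ e^{-y²} dy` and `s = √(x² + c)`. The defect
`D_c(x) = I(x) - c⁻¹ (s - x) e^{-x²}` tends to `0` at infinity and has derivative
`e^{-x²} (x / s + 1 - c) / (x + s)²`, whose sign is that of the increasing function
`x / s + 1 - c`. For `c = 2` this is negative everywhere since `x < s`, so `D_2` decreases to `0`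
and is positive. For `c = 4 / π` we have `D_c(0) = 0` because `I(0) = √π / 2`, and on `[0, ∞)` the
function `D_c` first decreases and then increases, so it stays `≤ 0` between its zeros at `0`
and at infinity.
-/

open Real MeasureTheory Set Filter Topology

theorem hasDerivAt_integral_Ioi {E : Type*} [NormedAddCommGroup E] [NormedSpace ℝ E]
    [CompleteSpace E] {f : ℝ → E} {x : ℝ} (hf : Integrable f) (hfx : ContinuousAt f x) :
    HasDerivAt (fun b => ∫ y in Ioi b, f y) (-f x) x := by
  have hsplit :
      (fun b => ∫ y in Ioi b, f y) = fun b => (∫ y in Ioi x, f y) - ∫ y in x..b, f y := by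
    ext b
    rw [← intervalIntegral.integral_Ioi_sub_Ioi' hf.integrableOn hf.integrableOn, sub_sub_cancel]
  rw [hsplit, ← zero_sub]
  exact (hasDerivAt_const x _).sub (intervalIntegral.integral_hasDerivAt_right
    IntervalIntegrable.refl hf.aestronglyMeasurable.stronglyMeasurableAtFilter hfx)

theorem pos_of_hasDerivAt_neg_of_tendsto_zero {f f' : ℝ → ℝ} (hf : ∀ x, HasDerivAt f (f' x) x)
    (hf' : ∀ x, f' x < 0) (hlim : Tendsto f atTop (𝓝 0)) (x : ℝ) : 0 < f x :=
  have hanti := strictAnti_of_hasDerivAt_neg hf hf'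
  (hanti.antitone.le_of_tendsto hlim (x + 1)).trans_lt (hanti (lt_add_one x))

theorem nonpos_of_hasDerivAt_mul_monotoneOn {f w g : ℝ → ℝ} {a x : ℝ}
    (hf : ∀ y ∈ Ici a, HasDerivAt f (w y * g y) y) (hw : ∀ y ∈ Ici a, 0 ≤ w y)
    (hg : MonotoneOn g (Ici a)) (ha : f a = 0) (hlim : Tendsto f atTop (𝓝 0)) (hx : a ≤ x) :
    f x ≤ 0 := by
  have hcont : ContinuousOn f (Ici a) := fun y hy => (hf y hy).continuousAt.continuousWithinAt
  rcases le_or_gt (g x) 0 with hgx | hgx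
  · have hanti : AntitoneOn f (Icc a x) := by
      refine antitoneOn_of_hasDerivWithinAt_nonpos (f' := fun y => w y * g y) (convex_Icc a x)
        (hcont.mono Icc_subset_Ici_self) (fun y hy => ?_) (fun y hy => ?_) <;>
        rw [interior_Icc] at hy
      · exact (hf y hy.1.le).hasDerivWithinAt
      · exact mul_nonpos_of_nonneg_of_nonpos (hw y hy.1.le)
          ((hg hy.1.le hx hy.2.le).trans hgx)
    simpa [ha] using hanti (left_mem_Icc.2 hx) (right_mem_Icc.2 hx) hx
  · have hmono : MonotoneOn f (Ici x) := by
      refine monotoneOn_of_hasDerivWithinAt_nonneg (f' := fun y => w y * g y) (convex_Ici x)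
        (hcont.mono (Ici_subset_Ici.2 hx)) (fun y hy => ?_) (fun y hy => ?_) <;>
        rw [interior_Ici] at hy
      · exact (hf y (hx.trans hy.le)).hasDerivWithinAt
      · exact mul_nonneg (hw y (hx.trans hy.le))
          (hgx.le.trans (hg hx (hx.trans hy.le) hy.le))
    exact ge_of_tendsto hlim (eventually_atTop.2 ⟨x, fun y hy => hmono self_mem_Ici hy hy⟩)

theorem abs_lt_sqrt_sq_add {c : ℝ} (hc : 0 < c) (x : ℝ) : |x| < √(x ^ 2 + c) := by
  rw [← sqrt_sq_eq_abs]
  exact sqrt_lt_sqrt (sq_nonneg x) (lt_add_of_pos_right _ hc)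

theorem add_sqrt_sq_add_pos {c : ℝ} (hc : 0 < c) (x : ℝ) : 0 < x + √(x ^ 2 + c) := by
  linarith [neg_abs_le x, abs_lt_sqrt_sq_add hc x]

theorem hasDerivAt_sqrt_sq_add {c : ℝ} (hc : 0 < c) (x : ℝ) :
    HasDerivAt (fun x => √(x ^ 2 + c)) (x / √(x ^ 2 + c)) x := by
  convert ((hasDerivAt_pow 2 x).add_const c).sqrt (by positivity) using 1
  field_simp
  ring

theorem strictMono_div_sqrt_sq_add {c : ℝ} (hc : 0 < c) :
    StrictMono fun x => x / √(x ^ 2 + c) := by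
  refine strictMono_of_hasDerivAt_pos
    (fun x => (hasDerivAt_id x).div (hasDerivAt_sqrt_sq_add hc x) (by positivity)) fun x => ?_
  have hs : √(x ^ 2 + c) ^ 2 = x ^ 2 + c := sq_sqrt (by positivity)
  have : 0 < √(x ^ 2 + c) := by positivity
  field_simp
  simp only [id, zero_mul, sub_pos, hs]
  linarith

noncomputable def gaussianTail (x : ℝ) : ℝ := ∫ y in Ioi x, exp (-y ^ 2)

theorem integrable_exp_neg_sq : Integrable fun y : ℝ => exp (-y ^ 2) := by
  simpa using integrable_exp_neg_mul_sq one_pos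

theorem gaussianTail_zero : gaussianTail 0 = √π / 2 := by
  simpa [gaussianTail] using integral_gaussian_Ioi 1

theorem hasDerivAt_gaussianTail (x : ℝ) : HasDerivAt gaussianTail (-exp (-x ^ 2)) x :=
  hasDerivAt_integral_Ioi integrable_exp_neg_sq (by fun_prop)

theorem tendsto_gaussianTail_atTop : Tendsto gaussianTail atTop (𝓝 0) :=
  tendsto_integral_Ioi_zero tendsto_id

noncomputable def gautschiBound (c x : ℝ) : ℝ := c⁻¹ * (√(x ^ 2 + c) - x)

noncomputable def gautschiDefect (c x : ℝ) : ℝ :=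
  gaussianTail x - gautschiBound c x * exp (-x ^ 2)

theorem gautschiBound_eq_inv {c : ℝ} (hc : 0 < c) (x : ℝ) :
    gautschiBound c x = (x + √(x ^ 2 + c))⁻¹ := by
  have hs : √(x ^ 2 + c) ^ 2 = x ^ 2 + c := sq_sqrt (by positivity)
  have := add_sqrt_sq_add_pos hc x
  refine eq_inv_of_mul_eq_one_left ?_
  rw [gautschiBound]
  field_simp
  generalize √(x ^ 2 + c) = s at hs ⊢
  obtain rfl : c = s ^ 2 - x ^ 2 := by linarith
  ring

theorem tendsto_gautschiBound_atTop {c : ℝ} (hc : 0 < c) :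
    Tendsto (gautschiBound c) atTop (𝓝 0) := by
  simp only [funext (gautschiBound_eq_inv hc)]
  exact tendsto_inv_atTop_zero.comp (tendsto_id.atTop_add_nonneg fun x => sqrt_nonneg _)

theorem tendsto_gautschiDefect_atTop {c : ℝ} (hc : 0 < c) :
    Tendsto (gautschiDefect c) atTop (𝓝 0) := by
  have hexp : Tendsto (fun x : ℝ => exp (-x ^ 2)) atTop (𝓝 0) :=
    tendsto_exp_neg_atTop_nhds_zero.comp (tendsto_pow_atTop two_ne_zero)
  have := tendsto_gaussianTail_atTop.sub ((tendsto_gautschiBound_atTop hc).mul hexp)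
  rwa [zero_mul, sub_zero] at this

theorem hasDerivAt_gautschiDefect {c : ℝ} (hc : 0 < c) (x : ℝ) :
    HasDerivAt (gautschiDefect c)
      (exp (-x ^ 2) / (x + √(x ^ 2 + c)) ^ 2 * (x / √(x ^ 2 + c) + 1 - c)) x := by
  have hbound : HasDerivAt (gautschiBound c) (c⁻¹ * (x / √(x ^ 2 + c) - 1)) x :=
    ((hasDerivAt_sqrt_sq_add hc x).sub (hasDerivAt_id x)).const_mul c⁻¹
  have hexp : HasDerivAt (fun x => exp (-x ^ 2)) (exp (-x ^ 2) * -(2 * x)) x := by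
    simpa using ((hasDerivAt_pow 2 x).neg).exp
  refine ((hasDerivAt_gaussianTail x).sub (hbound.mul hexp)).congr_deriv ?_
  have hs : √(x ^ 2 + c) ^ 2 = x ^ 2 + c := sq_sqrt (by positivity)
  have := add_sqrt_sq_add_pos hc x
  have : 0 < √(x ^ 2 + c) := by positivity
  rw [gautschiBound]
  field_simp
  generalize √(x ^ 2 + c) = s at hs ⊢
  obtain rfl : c = s ^ 2 - x ^ 2 := by linarith
  ring

theorem gautschiDefect_two_pos (x : ℝ) : 0 < gautschiDefect 2 x := by
  refine pos_of_hasDerivAt_neg_of_tendsto_zero (hasDerivAt_gautschiDefect two_pos)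
    (fun y => mul_neg_of_pos_of_neg
      (div_pos (exp_pos _) (pow_pos (add_sqrt_sq_add_pos two_pos y) 2)) ?_)
    (tendsto_gautschiDefect_atTop two_pos) x
  have : y / √(y ^ 2 + 2) < 1 :=
    (div_lt_one (by positivity)).2 ((le_abs_self y).trans_lt (abs_lt_sqrt_sq_add two_pos y))
  linarith

theorem gautschiDefect_four_div_pi_zero : gautschiDefect (4 / π) 0 = 0 := by
  have hsqrt : √(4 / π) = 2 / √π := by
    rw [sqrt_div' _ pi_pos.le, show (4 : ℝ) = 2 ^ 2 by norm_num, sqrt_sq zero_le_two]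
  have : 0 < √π := sqrt_pos.2 pi_pos
  simp only [gautschiDefect, gaussianTail_zero, gautschiBound, hsqrt, sq, zero_mul, zero_add,
    sub_zero, neg_zero, exp_zero, mul_one]
  field_simp
  rw [sq_sqrt pi_pos.le]
  ring

theorem gautschiDefect_four_div_pi_nonpos {x : ℝ} (hx : 0 ≤ x) :
    gautschiDefect (4 / π) x ≤ 0 := by
  have hc : 0 < 4 / π := by positivity
  refine nonpos_of_hasDerivAt_mul_monotoneOn (fun y _ => hasDerivAt_gautschiDefect hc y)
    (fun y _ => (div_pos (exp_pos _) (pow_pos (add_sqrt_sq_add_pos hc y) 2)).le) ?_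
    gautschiDefect_four_div_pi_zero (tendsto_gautschiDefect_atTop hc) hx
  exact fun a _ b _ hab =>
    sub_le_sub_right (add_le_add_left ((strictMono_div_sqrt_sq_add hc).monotone hab) 1) _

theorem gautschiDefect_pos_iff (c x : ℝ) :
    0 < gautschiDefect c x ↔ gautschiBound c x < exp (x ^ 2) * gaussianTail x := by
  rw [gautschiDefect, sub_pos, exp_neg, ← div_eq_mul_inv, div_lt_iff₀ (exp_pos _), mul_comm]

theorem gautschiDefect_nonpos_iff (c x : ℝ) :
    gautschiDefect c x ≤ 0 ↔ exp (x ^ 2) * gaussianTail x ≤ gautschiBound c x := by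
  rw [gautschiDefect, sub_nonpos, exp_neg, ← div_eq_mul_inv, le_div_iff₀ (exp_pos _), mul_comm]

/-- Gautschi's inequality for `p = 2`: for all `x ≥ 0`,
`(1/2)(√(x²+2) - x) < e^{x²} ∫ₓ^∞ e^{-y²} dy ≤ (π/4)(√(x² + 4/π) - x)`. -/
theorem gautschi_inequality (x : ℝ) (hx : 0 ≤ x) :
    (1/2) * (Real.sqrt (x ^ 2 + 2) - x)
        < Real.exp (x ^ 2) * ∫ y in Set.Ioi x, Real.exp (-y ^ 2)
    ∧ Real.exp (x ^ 2) * (∫ y in Set.Ioi x, Real.exp (-y ^ 2))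
        ≤ (Real.pi / 4) * (Real.sqrt (x ^ 2 + 4 / Real.pi) - x) := by
  have lower := (gautschiDefect_pos_iff 2 x).1 (gautschiDefect_two_pos x)
  have upper := (gautschiDefect_nonpos_iff (4 / π) x).1 (gautschiDefect_four_div_pi_nonpos hx)
  refine ⟨?_, ?_⟩
  · rw [one_div]
    exact lower
  · rw [← inv_div]
    exact upper
end

section
/- (Conte's inequality) For all x > 0, x(1 + x²/12) e^{-3x²/4} < e^{-x²} ∫₀^x e^{y²} dy ≤ (π²/(8x))(1 - e^{-x²}). -/
/-!
Both bounds come from the same device: a function vanishing at `0` whose derivative is positive on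
`(0, ∞)` is positive there. With `F x = ∫₀ˣ e^{y²} dy`, the lower bound is
`(x + x³/12) e^{x²/4} < F x`, whose difference has derivative
`e^{x²/4} (e^{3x²/4} - 1 - 3x²/4 - x⁴/24) > 0` by `e^s ≥ 1 + s + s²/2`. The upper bound is
`8 x F x < π² (e^{x²} - 1)`; the derivative of the difference is
`2((π² - 4) x e^{x²} - 4 F x)`, and this is positive by the same device once more, since its own
derivative is `2 e^{x²} ((π² - 8) + 2 (π² - 4) x²)` and `π² > 8`.
-/

open Real Set

noncomputable def integralExpSq (x : ℝ) : ℝ := ∫ y in (0 : ℝ)..x, exp (y ^ 2)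

@[simp]
theorem integralExpSq_zero : integralExpSq 0 = 0 :=
  intervalIntegral.integral_same

theorem hasDerivAt_integralExpSq (t : ℝ) : HasDerivAt integralExpSq (exp (t ^ 2)) t := by
  have hcont : Continuous fun y : ℝ => exp (y ^ 2) := by fun_prop
  exact intervalIntegral.integral_hasDerivAt_right (hcont.intervalIntegrable 0 t)
    (hcont.stronglyMeasurableAtFilter _ _) hcont.continuousAt

theorem hasDerivAt_exp_sq (t : ℝ) :
    HasDerivAt (fun u => exp (u ^ 2)) (2 * t * exp (t ^ 2)) t := by
  refine ((hasDerivAt_pow 2 t).exp).congr_deriv ?_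
  ring

theorem lt_of_hasDerivAt_pos {f f' : ℝ → ℝ} {a b : ℝ} (hab : a < b)
    (hf : ∀ t ∈ Icc a b, HasDerivAt f (f' t) t) (hf' : ∀ t ∈ Ioo a b, 0 < f' t) :
    f a < f b := by
  obtain ⟨c, hc, hslope⟩ := exists_hasDerivAt_eq_slope f f' hab
    (fun t ht => (hf t ht).continuousAt.continuousWithinAt)
    (fun t ht => hf t (Ioo_subset_Icc_self ht))
  have hpos := hf' c hc
  rw [hslope, div_pos_iff_of_pos_right (sub_pos.2 hab)] at hpos
  exact sub_pos.1 hpos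

theorem mul_exp_lt_integralExpSq {x : ℝ} (hx : 0 < x) :
    (x + x ^ 3 / 12) * exp (x ^ 2 / 4) < integralExpSq x := by
  have hderiv (t : ℝ) : HasDerivAt (fun u => integralExpSq u - (u + u ^ 3 / 12) * exp (u ^ 2 / 4))
      (exp (t ^ 2) - (1 + 3 * t ^ 2 / 4 + t ^ 4 / 24) * exp (t ^ 2 / 4)) t := by
    have hpoly : HasDerivAt (fun u : ℝ => u + u ^ 3 / 12) (1 + 3 * t ^ 2 / 12) t := by
      refine ((hasDerivAt_id' t).add ((hasDerivAt_pow 3 t).div_const 12)).congr_deriv ?_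
      ring
    have hexp : HasDerivAt (fun u : ℝ => exp (u ^ 2 / 4)) (exp (t ^ 2 / 4) * (t / 2)) t := by
      refine (((hasDerivAt_pow 2 t).div_const 4).exp).congr_deriv ?_
      ring
    refine ((hasDerivAt_integralExpSq t).sub (hpoly.mul hexp)).congr_deriv ?_
    ring
  have hderiv_pos (t : ℝ) (ht : t ∈ Ioo 0 x) :
      0 < exp (t ^ 2) - (1 + 3 * t ^ 2 / 4 + t ^ 4 / 24) * exp (t ^ 2 / 4) := by
    have hsplit : exp (t ^ 2) = exp (3 * t ^ 2 / 4) * exp (t ^ 2 / 4) := by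
      rw [← exp_add]
      ring_nf
    have hquad := quadratic_le_exp_of_nonneg (x := 3 * t ^ 2 / 4) (by positivity)
    rw [hsplit, sub_pos]
    refine mul_lt_mul_of_pos_right ?_ (exp_pos _)
    nlinarith [pow_pos ht.1 4]
  simpa [sub_pos] using lt_of_hasDerivAt_pos hx (fun t _ => hderiv t) hderiv_pos

theorem four_mul_integralExpSq_lt {x : ℝ} (hx : 0 < x) :
    4 * integralExpSq x < (π ^ 2 - 4) * x * exp (x ^ 2) := by
  have hderiv (t : ℝ) : HasDerivAt (fun u => (π ^ 2 - 4) * u * exp (u ^ 2) - 4 * integralExpSq u)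
      (exp (t ^ 2) * ((π ^ 2 - 8) + 2 * (π ^ 2 - 4) * t ^ 2)) t := by
    refine ((((hasDerivAt_id' t).const_mul (π ^ 2 - 4)).mul (hasDerivAt_exp_sq t)).sub
      ((hasDerivAt_integralExpSq t).const_mul 4)).congr_deriv ?_
    ring
  have hderiv_pos (t : ℝ) (_ : t ∈ Ioo 0 x) :
      0 < exp (t ^ 2) * ((π ^ 2 - 8) + 2 * (π ^ 2 - 4) * t ^ 2) := by
    have hpi : 9 < π ^ 2 := by nlinarith [pi_gt_three]
    have hsq := sq_nonneg t
    exact mul_pos (exp_pos _) (by nlinarith)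
  simpa [sub_pos] using lt_of_hasDerivAt_pos hx (fun t _ => hderiv t) hderiv_pos

theorem eight_mul_integralExpSq_lt {x : ℝ} (hx : 0 < x) :
    8 * x * integralExpSq x < π ^ 2 * (exp (x ^ 2) - 1) := by
  have hderiv (t : ℝ) : HasDerivAt (fun u => π ^ 2 * (exp (u ^ 2) - 1) - 8 * u * integralExpSq u)
      (2 * ((π ^ 2 - 4) * t * exp (t ^ 2) - 4 * integralExpSq t)) t := by
    refine ((((hasDerivAt_exp_sq t).sub_const 1).const_mul (π ^ 2)).sub
      (((hasDerivAt_id' t).const_mul 8).mul (hasDerivAt_integralExpSq t))).congr_deriv ?_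
    ring
  have hderiv_pos (t : ℝ) (ht : t ∈ Ioo 0 x) :
      0 < 2 * ((π ^ 2 - 4) * t * exp (t ^ 2) - 4 * integralExpSq t) := by
    linarith [four_mul_integralExpSq_lt ht.1]
  simpa [sub_pos] using lt_of_hasDerivAt_pos hx (fun t _ => hderiv t) hderiv_pos

/-- Conte's inequality: for all `x > 0`,
`x(1 + x²/12)e^{-3x²/4} < e^{-x²} ∫₀ˣ e^{y²} dy ≤ (π²/(8x))(1 - e^{-x²})`. -/
theorem conte_inequality (x : ℝ) (hx : 0 < x) :
    x * (1 + x ^ 2 / 12) * Real.exp (-(3 * x ^ 2) / 4)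
        < Real.exp (-x ^ 2) * ∫ y in (0:ℝ)..x, Real.exp (y ^ 2)
    ∧ Real.exp (-x ^ 2) * (∫ y in (0:ℝ)..x, Real.exp (y ^ 2))
        ≤ Real.pi ^ 2 / (8 * x) * (1 - Real.exp (-x ^ 2)) := by
  change _ < exp (-x ^ 2) * integralExpSq x ∧ exp (-x ^ 2) * integralExpSq x ≤ _
  have hexp_pos := exp_pos (-x ^ 2)
  constructor
  · calc x * (1 + x ^ 2 / 12) * exp (-(3 * x ^ 2) / 4)
        = exp (-x ^ 2) * ((x + x ^ 3 / 12) * exp (x ^ 2 / 4)) := by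
          rw [show -(3 * x ^ 2) / 4 = -x ^ 2 + x ^ 2 / 4 by ring, exp_add]
          ring
      _ < exp (-x ^ 2) * integralExpSq x :=
          mul_lt_mul_of_pos_left (mul_exp_lt_integralExpSq hx) hexp_pos
  · have hupper := mul_lt_mul_of_pos_left (eight_mul_integralExpSq_lt hx) hexp_pos
    have hinv : exp (-x ^ 2) * exp (x ^ 2) = 1 := by rw [← exp_add, neg_add_cancel, exp_zero]
    rw [div_mul_eq_mul_div, le_div_iff₀ (by positivity)]
    linear_combination hupper + π ^ 2 * hinv
end

section
/- Let u(x) = x⁴ - β₁x² (β₁ ≥ 1). Then sup_{x>0} ∫₀^x e^{u(y)} dy · ∫_x^∞ e^{-u(z)} dz ≥ (1/(4β₁)) ∫_{β₁/2 - 1}^{β₁/2} e^{y²} dy · ∫_{1-β₁/2}^{β₁/2} e^{-z²} dz, and consequently there is a constant such that this supremum is at least (1/(4e^{14})) exp[β₁²/4 - 2 log(1+β₁)]. -/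
/-!
Write `β₁ = 2r²`. Completing the square, `y⁴ - β₁y² = (y² - r²)² - r⁴`, and the constant cancels
in the product, so at `x = r` it equals `∫₀ʳ e^{(y²-r²)²} · ∫ᵣ^∞ e^{-(y²-r²)²}`. Since
`y² - r² = (y - r)(y + r)` with `r ≤ y + r` on `[0, r]` and `y + r ≤ 3r` on `[r, 2r]`, a linear
substitution bounds the two factors below by `r⁻¹ ∫₀^{r²} e^{s²}` and `(3r)⁻¹ ∫₀^{3r²} e^{-s²}`.
Both claimed bounds are elementary estimates of these Gaussian-type integrals; the explicit one uses
the tangent line `e^{s²} ≥ e^{2r²s - r⁴}` and `e^{-s²} ≥ 1 - s²`.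
-/

open Real MeasureTheory Set intervalIntegral

noncomputable def muckenhouptProduct (V : ℝ → ℝ) (x : ℝ) : ℝ :=
  (∫ y in (0:ℝ)..x, exp (V y)) * ∫ z in Ioi x, exp (-V z)

theorem muckenhouptProduct_add_const (V : ℝ → ℝ) (c x : ℝ) :
    muckenhouptProduct (fun y => V y + c) x = muckenhouptProduct V x := by
  simp only [muckenhouptProduct, neg_add, exp_add, intervalIntegral.integral_mul_const,
    MeasureTheory.integral_mul_const]
  rw [mul_mul_mul_comm, ← exp_add, add_neg_cancel, exp_zero, mul_one]

theorem muckenhouptProduct_quartic (r x : ℝ) :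
    muckenhouptProduct (fun y => y ^ 4 - 2 * r ^ 2 * y ^ 2) x =
      muckenhouptProduct (fun y => (y ^ 2 - r ^ 2) ^ 2) x := by
  rw [← muckenhouptProduct_add_const (fun y => (y ^ 2 - r ^ 2) ^ 2) (-r ^ 4)]
  congr
  funext y
  ring

theorem integrable_exp_neg_sq_sub_sq (b : ℝ) :
    Integrable fun z : ℝ => exp (-(z ^ 2 - b) ^ 2) := by
  refine ((integrable_exp_neg_mul_sq one_pos).const_mul (exp ((2 * b + 1) ^ 2 / 4))).mono'
    (by fun_prop) (Filter.Eventually.of_forall fun z => ?_)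
  rw [norm_of_nonneg (exp_pos _).le, ← exp_add]
  exact exp_le_exp.2 (by nlinarith [sq_nonneg (z ^ 2 - (2 * b + 1) / 2), sq_nonneg b])

theorem integral_exp_sq_div_le_integral_exp_sq_sub_sq {r : ℝ} (hr : 0 < r) :
    (∫ s in (0:ℝ)..r ^ 2, exp (s ^ 2)) / r ≤ ∫ y in (0:ℝ)..r, exp ((y ^ 2 - r ^ 2) ^ 2) := by
  have hscale : (∫ s in (0:ℝ)..r ^ 2, exp (s ^ 2)) / r =
      ∫ y in (0:ℝ)..r, exp ((r * (r - y)) ^ 2) := by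
    rw [integral_comp_sub_left (fun t => exp ((r * t) ^ 2)) r,
      integral_comp_mul_left (fun s => exp (s ^ 2)) hr.ne', sub_self, sub_zero, mul_zero,
      smul_eq_mul, ← sq, div_eq_inv_mul]
  rw [hscale]
  refine integral_mono_on hr.le ((by fun_prop : Continuous _).intervalIntegrable _ _)
    ((by fun_prop : Continuous _).intervalIntegrable _ _) fun y ⟨hy0, hyr⟩ => exp_le_exp.2 ?_
  have hfactor : (y ^ 2 - r ^ 2) ^ 2 = (r - y) ^ 2 * (r + y) ^ 2 := by ring
  rw [hfactor, mul_pow, mul_comm]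
  gcongr
  linarith

theorem integral_exp_neg_sq_div_le_integral_Ioi {r : ℝ} (hr : 0 < r) :
    (∫ s in (0:ℝ)..3 * r ^ 2, exp (-s ^ 2)) / (3 * r) ≤
      ∫ z in Ioi r, exp (-(z ^ 2 - r ^ 2) ^ 2) := by
  have hscale : (∫ s in (0:ℝ)..3 * r ^ 2, exp (-s ^ 2)) / (3 * r) =
      ∫ z in r..2 * r, exp (-(3 * r * (z - r)) ^ 2) := by
    rw [integral_comp_sub_right (fun t => exp (-(3 * r * t) ^ 2)) r,
      integral_comp_mul_left (fun s => exp (-s ^ 2)) (by positivity), sub_self, mul_zero,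
      smul_eq_mul, div_eq_inv_mul]
    ring_nf
  have hrestrict : ∫ z in r..2 * r, exp (-(z ^ 2 - r ^ 2) ^ 2) ≤
      ∫ z in Ioi r, exp (-(z ^ 2 - r ^ 2) ^ 2) := by
    rw [integral_of_le (by linarith)]
    exact setIntegral_mono_set (integrable_exp_neg_sq_sub_sq _).integrableOn
      (Filter.Eventually.of_forall fun z => (exp_pos _).le) Ioc_subset_Ioi_self.eventuallyLE
  rw [hscale]
  refine le_trans ?_ hrestrict
  refine integral_mono_on (by linarith) ((by fun_prop : Continuous _).intervalIntegrable _ _)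
    ((by fun_prop : Continuous _).intervalIntegrable _ _) fun z ⟨hrz, hz2r⟩ => exp_le_exp.2 ?_
  have hfactor : (z ^ 2 - r ^ 2) ^ 2 = (z - r) ^ 2 * (z + r) ^ 2 := by ring
  rw [neg_le_neg_iff, hfactor, mul_pow, mul_comm]
  gcongr <;> linarith

theorem le_muckenhouptProduct_quartic {r : ℝ} (hr : 0 < r) :
    (∫ s in (0:ℝ)..r ^ 2, exp (s ^ 2)) * (∫ s in (0:ℝ)..3 * r ^ 2, exp (-s ^ 2)) / (3 * r ^ 2) ≤
      muckenhouptProduct (fun y => y ^ 4 - 2 * r ^ 2 * y ^ 2) r := by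
  have hC := integral_exp_sq_div_le_integral_exp_sq_sub_sq hr
  have hD := integral_exp_neg_sq_div_le_integral_Ioi hr
  have hD0 : 0 ≤ (∫ s in (0:ℝ)..3 * r ^ 2, exp (-s ^ 2)) / (3 * r) :=
    div_nonneg (integral_nonneg (by positivity) fun s _ => (exp_pos _).le) (by positivity)
  have hC0 : 0 ≤ (∫ s in (0:ℝ)..r ^ 2, exp (s ^ 2)) / r :=
    div_nonneg (integral_nonneg (by positivity) fun s _ => (exp_pos _).le) hr.le
  rw [muckenhouptProduct_quartic, muckenhouptProduct]
  calc _ = (∫ s in (0:ℝ)..r ^ 2, exp (s ^ 2)) / r *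
        ((∫ s in (0:ℝ)..3 * r ^ 2, exp (-s ^ 2)) / (3 * r)) := by
        field_simp
    _ ≤ _ := mul_le_mul hC hD hD0 (hC0.trans hC)

theorem integral_le_two_mul_integral_of_even {f : ℝ → ℝ} (hf : Continuous f)
    (heven : ∀ x, f (-x) = f x) (hnonneg : ∀ x, 0 ≤ f x) {a b : ℝ} (hba : -b ≤ a) (ha : a ≤ 0) :
    ∫ x in a..b, f x ≤ 2 * ∫ x in (0:ℝ)..b, f x := by
  have hreflect : ∫ x in a..0, f x = ∫ x in (0:ℝ)..-a, f x := by
    simpa [heven] using (integral_comp_neg (a := 0) (b := -a) f).symm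
  have hmono : ∫ x in (0:ℝ)..-a, f x ≤ ∫ x in (0:ℝ)..b, f x :=
    integral_mono_interval le_rfl (by linarith) (by linarith)
      (Filter.Eventually.of_forall hnonneg) (hf.intervalIntegrable _ _)
  rw [← integral_add_adjacent_intervals (hf.intervalIntegrable a 0) (hf.intervalIntegrable 0 b),
    hreflect]
  linarith

theorem integral_exp_sq_mul_integral_exp_neg_sq_le {b : ℝ} (hb : 1 / 2 ≤ b) :
    (∫ y in (b - 1)..b, exp (y ^ 2)) * (∫ z in (1 - b)..b, exp (-z ^ 2)) ≤
      2 * ((∫ s in (0:ℝ)..b, exp (s ^ 2)) * ∫ s in (0:ℝ)..b, exp (-s ^ 2)) := by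
  have hcont₁ : Continuous fun y : ℝ => exp (y ^ 2) := by fun_prop
  have hcont₂ : Continuous fun y : ℝ => exp (-y ^ 2) := by fun_prop
  have htwo₁ := integral_le_two_mul_integral_of_even hcont₁ (fun x => by simp)
    (fun x => (exp_pos _).le) (a := b - 1) (b := b)
  have htwo₂ := integral_le_two_mul_integral_of_even hcont₂ (fun x => by simp)
    (fun x => (exp_pos _).le) (a := 1 - b) (b := b)
  have hsub₁ (h : 0 ≤ b - 1) : ∫ y in (b - 1)..b, exp (y ^ 2) ≤ ∫ s in (0:ℝ)..b, exp (s ^ 2) :=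
    integral_mono_interval h (by linarith) le_rfl
      (Filter.Eventually.of_forall fun _ => (exp_pos _).le) (hcont₁.intervalIntegrable _ _)
  have hsub₂ (h : 0 ≤ 1 - b) : ∫ z in (1 - b)..b, exp (-z ^ 2) ≤ ∫ s in (0:ℝ)..b, exp (-s ^ 2) :=
    integral_mono_interval h (by linarith) le_rfl
      (Filter.Eventually.of_forall fun _ => (exp_pos _).le) (hcont₂.intervalIntegrable _ _)
  have hpos₁ : ∀ a, a ≤ b → 0 ≤ ∫ y in a..b, exp (y ^ 2) :=
    fun a ha => integral_nonneg ha fun _ _ => (exp_pos _).le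
  have hpos₂ : ∀ a, a ≤ b → 0 ≤ ∫ y in a..b, exp (-y ^ 2) :=
    fun a ha => integral_nonneg ha fun _ _ => (exp_pos _).le
  rcases le_total b 1 with hb1 | hb1
  · calc _ ≤ (2 * ∫ s in (0:ℝ)..b, exp (s ^ 2)) * ∫ s in (0:ℝ)..b, exp (-s ^ 2) :=
          mul_le_mul (htwo₁ (by linarith) (by linarith)) (hsub₂ (by linarith))
            (hpos₂ _ (by linarith)) (by linarith [hpos₁ 0 (by linarith)])
      _ = _ := by ring
  · calc _ ≤ (∫ s in (0:ℝ)..b, exp (s ^ 2)) * (2 * ∫ s in (0:ℝ)..b, exp (-s ^ 2)) :=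
          mul_le_mul (hsub₁ (by linarith)) (htwo₂ (by linarith) (by linarith))
            (hpos₂ _ (by linarith)) (hpos₁ 0 (by linarith))
      _ = _ := by ring

theorem one_div_mul_integral_exp_sq_mul_integral_exp_neg_sq_le {b : ℝ} (hb : 1 / 2 ≤ b) :
    1 / (4 * (2 * b)) * ((∫ y in (b - 1)..b, exp (y ^ 2)) * ∫ z in (1 - b)..b, exp (-z ^ 2)) ≤
      (∫ s in (0:ℝ)..b, exp (s ^ 2)) * (∫ s in (0:ℝ)..3 * b, exp (-s ^ 2)) / (3 * b) := by
  have hb0 : 0 < b := by linarith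
  have hC0 : 0 ≤ ∫ s in (0:ℝ)..b, exp (s ^ 2) :=
    integral_nonneg hb0.le fun _ _ => (exp_pos _).le
  have hD0 : 0 ≤ ∫ s in (0:ℝ)..b, exp (-s ^ 2) :=
    integral_nonneg hb0.le fun _ _ => (exp_pos _).le
  have hwider : ∫ s in (0:ℝ)..b, exp (-s ^ 2) ≤ ∫ s in (0:ℝ)..3 * b, exp (-s ^ 2) :=
    integral_mono_interval le_rfl hb0.le (by linarith)
      (Filter.Eventually.of_forall fun _ => (exp_pos _).le)
      ((by fun_prop : Continuous _).intervalIntegrable _ _)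
  calc _ ≤ 1 / (4 * (2 * b)) *
          (2 * ((∫ s in (0:ℝ)..b, exp (s ^ 2)) * ∫ s in (0:ℝ)..b, exp (-s ^ 2))) :=
        mul_le_mul_of_nonneg_left (integral_exp_sq_mul_integral_exp_neg_sq_le hb) (by positivity)
    _ = (∫ s in (0:ℝ)..b, exp (s ^ 2)) * (∫ s in (0:ℝ)..b, exp (-s ^ 2)) / (4 * b) := by
        field_simp
    _ ≤ (∫ s in (0:ℝ)..b, exp (s ^ 2)) * (∫ s in (0:ℝ)..b, exp (-s ^ 2)) / (3 * b) := by
        gcongr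
        norm_num
    _ ≤ _ := by gcongr

theorem exp_sq_sub_exp_neg_sq_div_le_integral_exp_sq {b : ℝ} (hb : 0 < b) :
    (exp (b ^ 2) - exp (-b ^ 2)) / (2 * b) ≤ ∫ s in (0:ℝ)..b, exp (s ^ 2) := by
  have htangent :
      ∫ s in (0:ℝ)..b, exp (2 * b * s - b ^ 2) = (exp (b ^ 2) - exp (-b ^ 2)) / (2 * b) := by
    rw [integral_comp_mul_sub (fun s => exp s) (by positivity), integral_exp, smul_eq_mul,
      div_eq_inv_mul]
    ring_nf
  rw [← htangent]
  refine integral_mono_on hb.le ((by fun_prop : Continuous _).intervalIntegrable _ _)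
    ((by fun_prop : Continuous _).intervalIntegrable _ _) fun s _ => exp_le_exp.2 ?_
  nlinarith [sq_nonneg (s - b)]

theorem sub_cube_div_three_le_integral_exp_neg_sq {a : ℝ} (ha : 0 ≤ a) :
    a - a ^ 3 / 3 ≤ ∫ s in (0:ℝ)..a, exp (-s ^ 2) := by
  have hpoly : ∫ s in (0:ℝ)..a, (1 - s ^ 2) = a - a ^ 3 / 3 := by
    norm_num [intervalIntegral.integral_sub, integral_pow]
  rw [← hpoly]
  refine integral_mono_on ha ((by fun_prop : Continuous _).intervalIntegrable _ _)
    ((by fun_prop : Continuous _).intervalIntegrable _ _) fun s _ => ?_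
  linarith [add_one_le_exp (-s ^ 2)]

theorem exp_sq_div_le_integral_exp_sq_mul_integral_exp_neg_sq {b : ℝ} (hb : 1 / 2 ≤ b) :
    exp (b ^ 2) / (4 * exp 14 * (1 + 2 * b) ^ 2) ≤
      (∫ s in (0:ℝ)..b, exp (s ^ 2)) * (∫ s in (0:ℝ)..3 * b, exp (-s ^ 2)) / (3 * b) := by
  have hb0 : 0 < b := by linarith
  have hC := exp_sq_sub_exp_neg_sq_div_le_integral_exp_sq hb0
  have hD : 2 / 3 ≤ ∫ s in (0:ℝ)..3 * b, exp (-s ^ 2) := by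
    have hunit := sub_cube_div_three_le_integral_exp_neg_sq zero_le_one
    have hmono : ∫ s in (0:ℝ)..1, exp (-s ^ 2) ≤ ∫ s in (0:ℝ)..3 * b, exp (-s ^ 2) :=
      integral_mono_interval le_rfl zero_le_one (by linarith)
        (Filter.Eventually.of_forall fun _ => (exp_pos _).le)
        ((by fun_prop : Continuous _).intervalIntegrable _ _)
    norm_num at hunit
    linarith
  have hE : 5 / 4 ≤ exp (b ^ 2) := by nlinarith [add_one_le_exp (b ^ 2)]
  have hE' : exp (-b ^ 2) ≤ 1 := exp_le_one_iff.2 (by nlinarith)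
  have h14 : 15 ≤ exp 14 := by linarith [add_one_le_exp 14]
  calc exp (b ^ 2) / (4 * exp 14 * (1 + 2 * b) ^ 2) ≤ exp (b ^ 2) / (240 * b ^ 2) :=
        div_le_div_of_nonneg_left (by positivity) (by positivity) (by nlinarith)
    _ ≤ (exp (b ^ 2) - exp (-b ^ 2)) / (9 * b ^ 2) := by
        rw [div_le_div_iff₀ (by positivity) (by positivity)]
        nlinarith [sq_nonneg b]
    _ = (exp (b ^ 2) - exp (-b ^ 2)) / (2 * b) * (2 / 3) / (3 * b) := by
        field_simp
        ring
    _ ≤ _ := by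
        gcongr
        exact integral_nonneg hb0.le fun s _ => (exp_pos _).le

/-- For the double-well potential `u(x) = x⁴ - β₁x²` with `β₁ ≥ 1`, the
Muckenhoupt quantity `sup_{x>0} ∫₀ˣ e^u · ∫ₓ^∞ e^{-u}` is bounded below by
`(1/(4β₁)) ∫_{β₁/2-1}^{β₁/2} e^{y²} dy · ∫_{1-β₁/2}^{β₁/2} e^{-z²} dz`, and
consequently by `(1/(4e¹⁴)) exp[β₁²/4 - 2 log(1+β₁)]`. -/
theorem double_well_muckenhoupt_lower_bound (β₁ : ℝ) (hβ₁ : 1 ≤ β₁) :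
    (∃ x : ℝ, 0 < x ∧
      (1 / (4 * β₁)) * ((∫ y in (β₁/2 - 1)..(β₁/2), Real.exp (y ^ 2)) *
          ∫ z in (1 - β₁/2)..(β₁/2), Real.exp (-z ^ 2))
        ≤ (∫ y in (0:ℝ)..x, Real.exp (y ^ 4 - β₁ * y ^ 2)) *
            ∫ z in Set.Ioi x, Real.exp (-(z ^ 4 - β₁ * z ^ 2)))
    ∧ ∃ x : ℝ, 0 < x ∧
      (1 / (4 * Real.exp 14)) * Real.exp (β₁ ^ 2 / 4 - 2 * Real.log (1 + β₁))
        ≤ (∫ y in (0:ℝ)..x, Real.exp (y ^ 4 - β₁ * y ^ 2)) *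
            ∫ z in Set.Ioi x, Real.exp (-(z ^ 4 - β₁ * z ^ 2)) := by
  obtain ⟨r, hr, rfl⟩ : ∃ r, 0 < r ∧ β₁ = 2 * r ^ 2 :=
    ⟨√(β₁ / 2), sqrt_pos.2 (by linarith), by rw [sq_sqrt (by linarith)]; ring⟩
  have hb : 1 / 2 ≤ r ^ 2 := by linarith
  have hcore := le_muckenhouptProduct_quartic hr
  have hhalf : 2 * r ^ 2 / 2 = r ^ 2 := by ring
  refine ⟨⟨r, hr, le_trans ?_ hcore⟩, r, hr, le_trans ?_ hcore⟩
  · rw [hhalf]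
    exact one_div_mul_integral_exp_sq_mul_integral_exp_neg_sq_le hb
  · refine Eq.trans_le ?_ (exp_sq_div_le_integral_exp_sq_mul_integral_exp_neg_sq hb)
    rw [exp_sub, two_mul (log _), exp_add, exp_log (by positivity)]
    field_simp
    ring_nf
end

section
/- For all real y, z with z ≥ y ≥ 0 and z > 0, and for all θ ∈ ℝ: z² + y² + 4θ(z + y²/(z+y)) + 6θ² ≥ (1/6)(z² + y²). Consequently z² + y² + 4θ(z + y²/(z+y)) + 6θ² - β₁ ≥ (z²+y²)/6 - β₁. -/
/-!
Completing the square in `θ` bounds `4θa + 6θ²` below by `-(2/3)a²` with `a = z + y²/(z+y)`.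
Since `y²/(z+y) ≤ y/2` for `0 ≤ y ≤ z`, it remains to check
`z² + y² - (2/3)(z + y/2)² = (2z² - 4zy + 5y²)/6 ≥ (z² + y²)/6`, i.e. `(z - 2y)² ≥ 0`.
-/

section

variable {K : Type*} [Field K] [LinearOrder K] [IsStrictOrderedRing K]

theorem sq_div_add_le_half {y z : K} (hy : 0 ≤ y) (hyz : y ≤ z) :
    y ^ 2 / (z + y) ≤ y / 2 :=
  div_le_of_le_mul₀ (by linarith) (by linarith) (by nlinarith)

theorem neg_two_thirds_mul_sq_le (a θ : K) :
    -(2 / 3) * a ^ 2 ≤ 4 * θ * a + 6 * θ ^ 2 := by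
  calc -(2 / 3) * a ^ 2 ≤ 6 * (θ + a / 3) ^ 2 - 2 / 3 * a ^ 2 := by
        linarith [sq_nonneg (θ + a / 3)]
    _ = 4 * θ * a + 6 * θ ^ 2 := by ring

theorem sq_add_sq_div_six_le (y z : K) :
    (z ^ 2 + y ^ 2) / 6 ≤ z ^ 2 + y ^ 2 - 2 / 3 * (z + y / 2) ^ 2 := by
  nlinarith [sq_nonneg (z - 2 * y)]

end

theorem pointwise_quadratic_lower_bound_general
    (y z θ β₁ : ℝ) (hy : 0 ≤ y) (hyz : y ≤ z) :
    (z ^ 2 + y ^ 2) / 6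
        ≤ z ^ 2 + y ^ 2 + 4 * θ * (z + y ^ 2 / (z + y)) + 6 * θ ^ 2
    ∧ (z ^ 2 + y ^ 2) / 6 - β₁
        ≤ z ^ 2 + y ^ 2 + 4 * θ * (z + y ^ 2 / (z + y)) + 6 * θ ^ 2 - β₁ := by
  set w := y ^ 2 / (z + y)
  have hw : w ≤ y / 2 := sq_div_add_le_half hy hyz
  have hw₀ : 0 ≤ w := div_nonneg (sq_nonneg y) (by linarith)
  have hsq : (z + w) ^ 2 ≤ (z + y / 2) ^ 2 := pow_le_pow_left₀ (by linarith) (by linarith) 2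
  have key : (z ^ 2 + y ^ 2) / 6 ≤ z ^ 2 + y ^ 2 + 4 * θ * (z + w) + 6 * θ ^ 2 :=
    calc (z ^ 2 + y ^ 2) / 6 ≤ z ^ 2 + y ^ 2 - 2 / 3 * (z + y / 2) ^ 2 := sq_add_sq_div_six_le y z
      _ ≤ z ^ 2 + y ^ 2 - 2 / 3 * (z + w) ^ 2 := by linarith
      _ ≤ z ^ 2 + y ^ 2 + 4 * θ * (z + w) + 6 * θ ^ 2 := by
        linarith [neg_two_thirds_mul_sq_le (z + w) θ]
  exact ⟨key, by linarith⟩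

/-- Key pointwise inequality: for `z ≥ y ≥ 0`, `z > 0` and any `θ`,
`z² + y² + 4θ(z + y²/(z+y)) + 6θ² ≥ (z² + y²)/6`, and consequently
`z² + y² + 4θ(z + y²/(z+y)) + 6θ² - β₁ ≥ (z² + y²)/6 - β₁`. -/
theorem pointwise_quadratic_lower_bound
    (y z θ β₁ : ℝ) (hy : 0 ≤ y) (hyz : y ≤ z) (hz : 0 < z) :
    (z ^ 2 + y ^ 2) / 6
        ≤ z ^ 2 + y ^ 2 + 4 * θ * (z + y ^ 2 / (z + y)) + 6 * θ ^ 2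
    ∧ (z ^ 2 + y ^ 2) / 6 - β₁
        ≤ z ^ 2 + y ^ 2 + 4 * θ * (z + y ^ 2 / (z + y)) + 6 * θ ^ 2 - β₁ :=
  pointwise_quadratic_lower_bound_general y z θ β₁ hy hyz
end
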